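/- Consider the general difference scheme: grid functions y^0, y^1, …, y^M in the space V of real vectors (y_0, …, y_N) with y_0 = y_N = 0, weights g_s^{j+1} (0 ≤ s ≤ j ≤ M−1) satisfying g_j^{j+1} > g_{j-1}^{j+1} > … > g_0^{j+1} ≥ c₂ > 0 for each j, parameters σ_{j+1} with g_j^{j+1}/(2 g_j^{j+1} − g_{j-1}^{j+1}) ≤ σ_{j+1} ≤ 1 (with g_{-1}^{1} = 0), a linear operator Λ : V → V with (−Λ y, y) ≥ κ ‖y‖₀² for some κ > 0 and all y ∈ V, and source terms φ^{1}, …, φ^{M} ∈ V. Suppose that for every j = 0, …, M−1 the equation Σ_{s=0}^{j} (y^{s+1} − y^s) g_s^{j+1} = Λ(σ_{j+1} y^{j+1} + (1 − σ_{j+1}) y^{j}) + φ^{j+1} holds in V. Then for every j with 0 ≤ j ≤ M−1, ‖y^{j+1}‖₀² ≤ ‖y^0‖₀² + (1/(2 κ c₂)) · max_{1 ≤ k ≤ M} ‖φ^{k}‖₀². In particular the scheme is unconditionally stable. -/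

import Mathlib

/-!
Pointwise in space, the weighted difference `Σ_s g_s (v_{s+1} - v_s)` tested against
`w = σ v_{j+1} + (1 - σ) v_j` dominates `½ Σ_s g_s (v_{s+1}² - v_s²)`: the defect is
`½ Σ_s g_s ((w - v_s)² - (w - v_{s+1})²)`, which summation by parts and the monotonicity of the
weights reduce to its last two terms, and these are controlled by the lower bound on `σ`.
Summed over the grid and combined with `(-Λw, w) ≥ κ‖w‖²` and Young's inequality for `(φ, w)`,
this gives `Σ_s g_s (‖y^{s+1}‖² - ‖y^s‖²) ≤ ‖φ^{j+1}‖² / (2κ)`. Summing by parts once more, an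
induction on `j` shows `‖y^{j+1}‖²` never exceeds `‖y^0‖² + max_k ‖φ^k‖² / (2κc₂)`.
-/

/-- The discrete inner product `(u, w) = Σ_{i=1}^{N-1} u_i w_i h` on grid functions. -/
noncomputable def gridInner (h : ℝ) (N : ℕ) (u w : ℕ → ℝ) : ℝ :=
  ∑ i ∈ Finset.Ico 1 N, u i * w i * h

open Finset

theorem monotoneOn_Iic_of_le_succ {β : Type*} [Preorder β] {f : ℕ → β} {j : ℕ}
    (h : ∀ s < j, f s ≤ f (s + 1)) : MonotoneOn f (Set.Iic j) :=
  monotoneOn_of_le_succ Set.ordConnected_Iic fun a _ _ ha =>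
    h a (Order.succ_le_iff.1 ha)

theorem sum_range_mul_sub_by_parts {R : Type*} [CommRing R] (g b : ℕ → R) (j : ℕ) :
    ∑ s ∈ range (j + 1), g s * (b (s + 1) - b s) =
      g j * b (j + 1) - g 0 * b 0 - ∑ s ∈ range j, (g (s + 1) - g s) * b (s + 1) := by
  induction j with
  | zero => simp only [zero_add, range_one, sum_singleton, range_zero, sum_empty]; ring
  | succ n ih => rw [sum_range_succ, ih, sum_range_succ]; ring

theorem sub_mul_sub_mul_le_sum_mul_sub {g b : ℕ → ℝ} {j : ℕ} (hg0 : 0 ≤ g 0)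
    (hg : MonotoneOn g (Set.Iic j)) (hb : ∀ s, 0 ≤ b s) :
    (g j - if j = 0 then 0 else g (j - 1)) * b j - g j * b (j + 1) ≤
      ∑ s ∈ range (j + 1), g s * (b s - b (s + 1)) := by
  cases j with
  | zero => simp [mul_sub]
  | succ m =>
    have hparts := sum_range_mul_sub_by_parts g b (m + 1)
    have hsum : ∑ s ∈ range (m + 1 + 1), g s * (b s - b (s + 1)) =
        -∑ s ∈ range (m + 1 + 1), g s * (b (s + 1) - b s) := by
      rw [← sum_neg_distrib]
      exact sum_congr rfl fun s _ => by ring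
    have hmid : 0 ≤ ∑ s ∈ range m, (g (s + 1) - g s) * b (s + 1) :=
      sum_nonneg fun s hs => by
        have hs : s < m := mem_range.1 hs
        exact mul_nonneg
          (sub_nonneg.2 (hg (by simp; omega) (by simp; omega) (Nat.le_succ s))) (hb _)
    rw [hsum, hparts, sum_range_succ]
    simp only [Nat.add_one_ne_zero, if_false, Nat.add_sub_cancel]
    nlinarith [mul_nonneg hg0 (hb 0)]

theorem mul_one_sub_sq_le_sub_mul_sq {a p σ : ℝ} (hp : 0 ≤ p) (hpa : p < 2 * a)
    (hσl : a / (2 * a - p) ≤ σ) (hσu : σ ≤ 1) : a * (1 - σ) ^ 2 ≤ (a - p) * σ ^ 2 := by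
  have hd : 0 < 2 * a - p := by linarith
  have hσ0 : 0 ≤ σ := (div_nonneg (by linarith) hd.le).trans hσl
  rw [div_le_iff₀ hd] at hσl
  nlinarith [mul_nonneg (mul_nonneg hp hσ0) (sub_nonneg.2 hσu)]

/-- Lemma 1 of Alikhanov's paper, in one space point. -/
theorem half_sum_mul_sq_sub_le {g v : ℕ → ℝ} {σ : ℝ} {j : ℕ} (hg0 : 0 < g 0)
    (hg : MonotoneOn g (Set.Iic j))
    (hσl : g j / (2 * g j - if j = 0 then 0 else g (j - 1)) ≤ σ) (hσu : σ ≤ 1) :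
    (1 / 2) * ∑ s ∈ range (j + 1), g s * (v (s + 1) * v (s + 1) - v s * v s) ≤
      (∑ s ∈ range (j + 1), (v (s + 1) - v s) * g s) * (σ * v (j + 1) + (1 - σ) * v j) := by
  set w := σ * v (j + 1) + (1 - σ) * v j
  have hdefect : (∑ s ∈ range (j + 1), (v (s + 1) - v s) * g s) * w -
        (1 / 2) * ∑ s ∈ range (j + 1), g s * (v (s + 1) * v (s + 1) - v s * v s) =
      (1 / 2) * ∑ s ∈ range (j + 1), g s * ((w - v s) ^ 2 - (w - v (s + 1)) ^ 2) := by
    rw [sum_mul, mul_sum, mul_sum, ← sum_sub_distrib]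
    exact sum_congr rfl fun s _ => by ring
  have hp : 0 ≤ (if j = 0 then 0 else g (j - 1)) ∧
      (if j = 0 then 0 else g (j - 1)) < 2 * g j := by
    cases j with
    | zero => simp [hg0]
    | succ m =>
      have hm : g 0 ≤ g m := hg (by simp) (by simp) (Nat.zero_le m)
      have hm1 : g m ≤ g (m + 1) := hg (by simp) (by simp) (Nat.le_succ m)
      simp only [Nat.add_one_ne_zero, if_false, Nat.add_sub_cancel]
      constructor <;> linarith
  have hcoef := mul_one_sub_sq_le_sub_mul_sq hp.1 hp.2 hσl hσu
  have hlast := sub_mul_sub_mul_le_sum_mul_sub hg0.le hg (fun s => sq_nonneg (w - v s))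
  have hwj : w - v j = σ * (v (j + 1) - v j) := by ring
  have hwj1 : w - v (j + 1) = -((1 - σ) * (v (j + 1) - v j)) := by ring
  simp only [hwj, hwj1, neg_sq, mul_pow] at hlast
  nlinarith [mul_nonneg (sub_nonneg.2 hcoef) (sq_nonneg (v (j + 1) - v j))]

section gridInner

variable {h : ℝ} {N : ℕ}

theorem gridInner_self_nonneg (hh : 0 ≤ h) (u : ℕ → ℝ) : 0 ≤ gridInner h N u u :=
  sum_nonneg fun _ _ => mul_nonneg (mul_self_nonneg _) hh

theorem gridInner_neg_left (u w : ℕ → ℝ) :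
    gridInner h N (fun i => -u i) w = -gridInner h N u w := by
  simp only [gridInner, neg_mul, sum_neg_distrib]

theorem gridInner_le_young {κ : ℝ} (hh : 0 ≤ h) (hκ : 0 < κ) (u w : ℕ → ℝ) :
    gridInner h N u w ≤ κ * gridInner h N w w + 1 / (4 * κ) * gridInner h N u u := by
  simp only [gridInner, mul_sum, ← sum_add_distrib]
  refine sum_le_sum fun i _ => ?_
  have hsq : κ * (w i * w i) + 1 / (4 * κ) * (u i * u i) - u i * w i =
      (2 * κ * w i - u i) ^ 2 / (4 * κ) := by
    field_simp
    ring
  have hpoint : u i * w i ≤ κ * (w i * w i) + 1 / (4 * κ) * (u i * u i) := by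
    rw [← sub_nonneg, hsq]
    positivity
  calc u i * w i * h ≤ (κ * (w i * w i) + 1 / (4 * κ) * (u i * u i)) * h :=
        mul_le_mul_of_nonneg_right hpoint hh
    _ = κ * (w i * w i * h) + 1 / (4 * κ) * (u i * u i * h) := by ring

theorem sum_mul_gridInner_sub (S : Finset ℕ) (g : ℕ → ℝ) (y : ℕ → ℕ → ℝ) :
    ∑ s ∈ S, g s * (gridInner h N (y (s + 1)) (y (s + 1)) - gridInner h N (y s) (y s)) =
      ∑ i ∈ Ico 1 N, (∑ s ∈ S, g s * (y (s + 1) i * y (s + 1) i - y s i * y s i)) * h := by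
  simp only [gridInner, ← sum_sub_distrib, mul_sum, sum_mul]
  rw [sum_comm]
  exact sum_congr rfl fun i _ => sum_congr rfl fun s _ => by ring

theorem sum_mul_gridInner_sub_le {κ σ : ℝ} {j : ℕ} {g f : ℕ → ℝ} {y : ℕ → ℕ → ℝ}
    {Λ : (ℕ → ℝ) → ℕ → ℝ} (hh : 0 ≤ h) (hκ : 0 < κ) (hg0 : 0 < g 0)
    (hg : MonotoneOn g (Set.Iic j))
    (hσl : g j / (2 * g j - if j = 0 then 0 else g (j - 1)) ≤ σ) (hσu : σ ≤ 1)
    (hΛ : ∀ u : ℕ → ℝ, u 0 = 0 → u N = 0 →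
      gridInner h N (fun i => -(Λ u i)) u ≥ κ * gridInner h N u u)
    (hbc : y j 0 = 0 ∧ y j N = 0) (hbc' : y (j + 1) 0 = 0 ∧ y (j + 1) N = 0)
    (hscheme : ∀ i, 1 ≤ i → i < N →
      ∑ s ∈ range (j + 1), (y (s + 1) i - y s i) * g s =
        Λ (fun x => σ * y (j + 1) x + (1 - σ) * y j x) i + f i) :
    ∑ s ∈ range (j + 1), g s *
        (gridInner h N (y (s + 1)) (y (s + 1)) - gridInner h N (y s) (y s)) ≤
      1 / (2 * κ) * gridInner h N f f := by
  set w : ℕ → ℝ := fun x => σ * y (j + 1) x + (1 - σ) * y j x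
  have hΛw : gridInner h N (Λ w) w ≤ -(κ * gridInner h N w w) := by
    have := hΛ w (by simp [w, hbc.1, hbc'.1]) (by simp [w, hbc.2, hbc'.2])
    rw [gridInner_neg_left] at this
    linarith
  have hpointwise : ∑ s ∈ range (j + 1), g s *
        (gridInner h N (y (s + 1)) (y (s + 1)) - gridInner h N (y s) (y s)) ≤
      2 * (gridInner h N (Λ w) w + gridInner h N f w) := by
    rw [sum_mul_gridInner_sub, gridInner, gridInner, ← sum_add_distrib, mul_sum]
    refine sum_le_sum fun i hi => ?_
    obtain ⟨hi1, hiN⟩ := mem_Ico.1 hi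
    have hlemma := half_sum_mul_sq_sub_le (v := fun t => y t i) hg0 hg hσl hσu
    rw [hscheme i hi1 hiN] at hlemma
    calc (∑ s ∈ range (j + 1), g s * (y (s + 1) i * y (s + 1) i - y s i * y s i)) * h
        ≤ (2 * ((Λ w i + f i) * w i)) * h := mul_le_mul_of_nonneg_right (by linarith) hh
      _ = 2 * (Λ w i * w i * h + f i * w i * h) := by ring
  have hyoung := gridInner_le_young (N := N) hh hκ f w
  have hconst : 1 / (2 * κ) = 2 * (1 / (4 * κ)) := by field_simp; ring
  rw [hconst]
  linarith

end gridInner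

theorem le_add_of_sum_mul_sub_le {E g : ℕ → ℝ} {c B : ℝ} {j : ℕ} (hc : 0 < c) (hB : 0 ≤ B)
    (hcg : c ≤ g 0) (hg : MonotoneOn g (Set.Iic j)) (hE : ∀ s ≤ j, E s ≤ E 0 + B)
    (hsum : ∑ s ∈ range (j + 1), g s * (E (s + 1) - E s) ≤ c * B) :
    E (j + 1) ≤ E 0 + B := by
  have hgj : g 0 ≤ g j := hg (by simp) (by simp) (Nat.zero_le j)
  have hmid : ∑ s ∈ range j, (g (s + 1) - g s) * E (s + 1) ≤ (g j - g 0) * (E 0 + B) := by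
    calc ∑ s ∈ range j, (g (s + 1) - g s) * E (s + 1)
        ≤ ∑ s ∈ range j, (g (s + 1) - g s) * (E 0 + B) := by
          refine sum_le_sum fun s hs => ?_
          have hs : s < j := mem_range.1 hs
          exact mul_le_mul_of_nonneg_left (hE (s + 1) hs)
            (sub_nonneg.2 (hg (by simp; omega) (by simp; omega) (Nat.le_succ s)))
      _ = (g j - g 0) * (E 0 + B) := by rw [← sum_mul, sum_range_sub g]
  rw [sum_range_mul_sub_by_parts] at hsum
  have hmul : g j * E (j + 1) ≤ g j * (E 0 + B) := by
    nlinarith [mul_nonneg (sub_nonneg.2 hcg) hB]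
  exact le_of_mul_le_mul_left hmul (hc.trans_le (hcg.trans hgj))

theorem le_add_of_forall_sum_mul_sub_le {E : ℕ → ℝ} {g : ℕ → ℕ → ℝ} {c B : ℝ} {M : ℕ}
    (hc : 0 < c) (hB : 0 ≤ B) (hcg : ∀ j < M, c ≤ g j 0)
    (hg : ∀ j < M, MonotoneOn (g j) (Set.Iic j))
    (hsum : ∀ j < M, ∑ s ∈ range (j + 1), g j s * (E (s + 1) - E s) ≤ c * B) :
    ∀ j ≤ M, E j ≤ E 0 + B := by
  intro j
  induction j using Nat.strong_induction_on with
  | _ j ih =>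
    intro hj
    cases j with
    | zero => linarith
    | succ j =>
      exact le_add_of_sum_mul_sub_le hc hB (hcg j hj) (hg j hj)
        (fun s hs => ih s (by omega) (by omega)) (hsum j hj)

theorem theorem1_stability (l h κ c₂ : ℝ) (N M : ℕ)
    (hM : 0 < M) (hl : 0 < l) (hh : h = l / N)
    (hκ : 0 < κ) (hc₂ : 0 < c₂)
    (g : ℕ → ℕ → ℝ) (σ : ℕ → ℝ) (y φ : ℕ → ℕ → ℝ)
    (Λ : (ℕ → ℝ) → (ℕ → ℝ))
    (hΛpos : ∀ u : ℕ → ℝ, u 0 = 0 → u N = 0 →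
      gridInner h N (fun i => -(Λ u i)) u ≥ κ * gridInner h N u u)
    (hgmono : ∀ j < M, ∀ s < j, g j s < g j (s + 1))
    (hg0 : ∀ j < M, c₂ ≤ g j 0)
    (hσl : ∀ j < M, g j j / (2 * g j j - if j = 0 then 0 else g j (j - 1)) ≤ σ j)
    (hσu : ∀ j < M, σ j ≤ 1)
    (hbc : ∀ j ≤ M, y j 0 = 0 ∧ y j N = 0)
    (hscheme : ∀ j < M, ∀ i, 1 ≤ i → i < N →
      ∑ s ∈ Finset.range (j + 1), (y (s + 1) i - y s i) * g j s =
        Λ (fun x => σ j * y (j + 1) x + (1 - σ j) * y j x) i + φ (j + 1) i) :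
    ∀ j < M, gridInner h N (y (j + 1)) (y (j + 1)) ≤
      gridInner h N (y 0) (y 0) + (1 / (2 * κ * c₂)) *
        (Finset.Icc 1 M).sup' (Finset.nonempty_Icc.mpr hM)
          (fun k => gridInner h N (φ k) (φ k)) := by
  have hh0 : 0 ≤ h := hh ▸ div_nonneg hl.le (Nat.cast_nonneg N)
  set F := (Finset.Icc 1 M).sup' (Finset.nonempty_Icc.mpr hM)
    (fun k => gridInner h N (φ k) (φ k))
  have hφF : ∀ k, 1 ≤ k → k ≤ M → gridInner h N (φ k) (φ k) ≤ F :=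
    fun k hk1 hkM => le_sup' (fun k => gridInner h N (φ k) (φ k)) (mem_Icc.2 ⟨hk1, hkM⟩)
  have hF0 : 0 ≤ F := (gridInner_self_nonneg hh0 _).trans (hφF 1 le_rfl hM)
  have hmono : ∀ j < M, MonotoneOn (g j) (Set.Iic j) :=
    fun j hj => monotoneOn_Iic_of_le_succ fun s hs => (hgmono j hj s hs).le
  refine fun j hj => le_add_of_forall_sum_mul_sub_le (E := fun t => gridInner h N (y t) (y t))
    hc₂ (mul_nonneg (by positivity) hF0) hg0 hmono (fun j hj => ?_) (j + 1) hj
  calc _ ≤ 1 / (2 * κ) * gridInner h N (φ (j + 1)) (φ (j + 1)) :=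
        sum_mul_gridInner_sub_le hh0 hκ (hc₂.trans_le (hg0 j hj)) (hmono j hj) (hσl j hj)
          (hσu j hj) hΛpos (hbc j hj.le) (hbc (j + 1) hj) (hscheme j hj)
    _ ≤ 1 / (2 * κ) * F := by gcongr; exact hφF (j + 1) (by omega) hj
    _ = c₂ * (1 / (2 * κ * c₂) * F) := by field_simp
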